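/- Let k ≥ 1 be an integer and α ≥ 1 a real number, and let J_k(x) = c_k · sinc^{2k}(x/(2kπα)) be the one-dimensional Jackson-type kernel. Then for every real β with 0 ≤ β < 2k − 1, the absolute discrete moment of order β with respect to the integer nodes is finite: sup_{u∈ℝ} Σ_{j∈ℤ} |J_k(u − j)| · |u − j|^β < +∞. -/

import Mathlib

open MeasureTheory

noncomputable section

/-- The normalized cardinal sine: `sinc x = sin(πx)/(πx)` for `x ≠ 0`, `sinc 0 = 1`. -/
def sinc (x : ℝ) : ℝ :=
  if x = 0 then 1 else Real.sin (Real.pi * x) / (Real.pi * x)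

/-- The one-dimensional Jackson-type kernel
`J_k(x) = c_k · sinc^{2k}(x/(2kπα))`, with
`c_k = (∫ sinc^{2k}(u/(2kπα)) du)⁻¹`. -/
def jackson (k : ℕ) (α : ℝ) (x : ℝ) : ℝ :=
  (∫ u : ℝ, sinc (u / (2 * k * Real.pi * α)) ^ (2 * k))⁻¹ *
    sinc (x / (2 * k * Real.pi * α)) ^ (2 * k)

lemma abs_sinc_le_one (x : ℝ) : |sinc x| ≤ 1 := by
  unfold sinc
  split_ifs with h
  · simp
  · rw [abs_div]
    have hπx : |Real.pi * x| > 0 := by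
      apply abs_pos.mpr; exact mul_ne_zero Real.pi_ne_zero h
    rw [div_le_one hπx]
    exact Real.abs_sin_le_abs

lemma abs_sinc_le (x : ℝ) (h : x ≠ 0) : |sinc x| ≤ 1 / (Real.pi * |x|) := by
  unfold sinc
  rw [if_neg h, abs_div]
  have hπx : 0 < Real.pi * |x| := mul_pos Real.pi_pos (abs_pos.mpr h)
  rw [div_le_div_iff₀ (by rw [abs_mul, abs_of_pos Real.pi_pos]; exact hπx) hπx]
  rw [abs_mul, abs_of_pos Real.pi_pos]
  calc |Real.sin (Real.pi * x)| * (Real.pi * |x|) ≤ 1 * (Real.pi * |x|) := by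
        exact mul_le_mul_of_nonneg_right (Real.abs_sin_le_one _) hπx.le
    _ = 1 * (Real.pi * |x|) := rfl

lemma aux_summable_nat (c1 c2 p : ℝ) (hp : p < -1) :
    Summable (fun n : ℕ => if n ≤ 1 then c1 else c2 * ((n : ℝ) - 1) ^ p) := by
  rw [← summable_nat_add_iff 2]
  have heq : (fun n : ℕ => if n + 2 ≤ 1 then c1 else c2 * (((n + 2 : ℕ) : ℝ) - 1) ^ p)
      = fun n : ℕ => c2 * (((n + 1 : ℕ) : ℝ)) ^ p := by
    funext n
    rw [if_neg (by omega)]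
    push_cast
    norm_num [show ((n:ℝ) + 2 - 1) = (n:ℝ) + 1 by ring]
  rw [heq]
  apply Summable.mul_left
  exact (summable_nat_add_iff 1).mpr (Real.summable_nat_rpow.mpr hp)

lemma aux_summable_int (c1 c2 p : ℝ) (hp : p < -1) :
    Summable (fun n : ℤ => if |n| ≤ 1 then c1 else c2 * ((|n| : ℝ) - 1) ^ p) := by
  apply Summable.of_nat_of_neg
  · exact (aux_summable_nat c1 c2 p hp).congr (fun n => by
      rw [Int.abs_natCast]
      by_cases h : n ≤ 1
      · rw [if_pos h, if_pos (by exact_mod_cast h)]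
      · rw [if_neg h, if_neg (by exact_mod_cast h)]
        push_cast
        simp [abs_neg, Nat.abs_cast])
  · exact (aux_summable_nat c1 c2 p hp).congr (fun n => by
      rw [abs_neg, Int.abs_natCast]
      by_cases h : n ≤ 1
      · rw [if_pos h, if_pos (by exact_mod_cast h)]
      · rw [if_neg h, if_neg (by exact_mod_cast h)]
        push_cast
        simp [abs_neg, Nat.abs_cast])

lemma abs_jackson_le (k : ℕ) (α : ℝ) (x : ℝ) :
    |jackson k α x| ≤ |(∫ u : ℝ, sinc (u / (2 * k * Real.pi * α)) ^ (2 * k))⁻¹| := by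
  rw [jackson, abs_mul, abs_pow]
  exact mul_le_of_le_one_right (abs_nonneg _)
    (pow_le_one₀ (abs_nonneg _) (abs_sinc_le_one _))

lemma abs_jackson_le' (k : ℕ) (hk : 1 ≤ k) (α : ℝ) (hα : 1 ≤ α) (x : ℝ) (hx : x ≠ 0) :
    |jackson k α x| ≤ |(∫ u : ℝ, sinc (u / (2 * k * Real.pi * α)) ^ (2 * k))⁻¹| *
      (2 * k * α / |x|) ^ (2 * k) := by
  have hk' : (1 : ℝ) ≤ (k : ℝ) := by exact_mod_cast hk
  have hD : (0 : ℝ) < 2 * k * Real.pi * α :=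
    mul_pos (mul_pos (by linarith) Real.pi_pos) (by linarith)
  rw [jackson, abs_mul, abs_pow]
  gcongr
  calc |sinc (x / (2 * k * Real.pi * α))|
      ≤ 1 / (Real.pi * |x / (2 * k * Real.pi * α)|) :=
        abs_sinc_le _ (div_ne_zero hx hD.ne')
    _ = 2 * k * α / |x| := by
        rw [abs_div, abs_of_pos hD]
        have hx0 : |x| ≠ 0 := abs_ne_zero.mpr hx
        field_simp

/-- For `0 ≤ β < 2k − 1`, the absolute discrete moment of order `β` of the Jackson-type
kernel with respect to the integer nodes is finite:
`sup_{u∈ℝ} ∑_{j∈ℤ} |J_k(u − j)| · |u − j|^β < +∞`. -/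
theorem jackson_moment_finite (k : ℕ) (hk : 1 ≤ k) (α : ℝ) (hα : 1 ≤ α)
    (β : ℝ) (hβ0 : 0 ≤ β) (hβ : β < 2 * (k : ℝ) - 1) :
    (∀ u : ℝ, Summable fun j : ℤ => |jackson k α (u - j)| * |u - j| ^ β) ∧
      ∃ M : ℝ, ∀ u : ℝ, (∑' j : ℤ, |jackson k α (u - j)| * |u - j| ^ β) ≤ M := by
  have hk' : (1 : ℝ) ≤ (k : ℝ) := by exact_mod_cast hk
  set c : ℝ := |(∫ u : ℝ, sinc (u / (2 * k * Real.pi * α)) ^ (2 * k))⁻¹| with hc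
  have hc0 : 0 ≤ c := abs_nonneg _
  set A : ℝ := (2 * (k : ℝ) * α) ^ (2 * k) with hA
  have hA0 : 0 ≤ A := by positivity
  have hp : β - 2 * (k : ℝ) < -1 := by linarith
  have hp0 : β - 2 * (k : ℝ) ≤ 0 := by linarith
  -- bound for large |x|
  have hJ2 : ∀ x : ℝ, 1 ≤ |x| → |jackson k α x| * |x| ^ β ≤ c * A * |x| ^ (β - 2 * (k : ℝ)) := by
    intro x hx
    have hx0 : (0 : ℝ) < |x| := lt_of_lt_of_le one_pos hx
    have hxne : x ≠ 0 := fun h => by simp [h] at hx0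
    calc |jackson k α x| * |x| ^ β
        ≤ c * (2 * k * α / |x|) ^ (2 * k) * |x| ^ β := by
          exact mul_le_mul_of_nonneg_right (abs_jackson_le' k hk α hα x hxne)
            (Real.rpow_nonneg (abs_nonneg x) β)
      _ = c * A * (|x| ^ β * (|x| ^ (2 * k))⁻¹) := by
          rw [div_pow, hA]; ring
      _ = c * A * |x| ^ (β - 2 * (k : ℝ)) := by
          congr 1
          have h2k : |x| ^ (2 * k) = |x| ^ ((2 * k : ℕ) : ℝ) := (Real.rpow_natCast _ _).symm
          rw [h2k, ← Real.rpow_neg hx0.le, ← Real.rpow_add hx0]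
          congr 1
          push_cast
          ring
  -- comparison function
  obtain ⟨g, hgsum, hg⟩ :
      ∃ g : ℤ → ℝ, Summable g ∧ ∀ n : ℤ, g n = (if |n| ≤ 1 then c * 2 ^ β else
        c * A * ((|n| : ℝ) - 1) ^ (β - 2 * (k : ℝ))) :=
    ⟨_, aux_summable_int (c * 2 ^ β) (c * A) _ hp, fun n => rfl⟩
  -- key pointwise comparison
  have key : ∀ u : ℝ, ∀ j : ℤ, |jackson k α (u - j)| * |u - j| ^ β ≤ g (j - ⌊u⌋) := by
    intro u j
    have hfl1 : (⌊u⌋ : ℝ) ≤ u := Int.floor_le u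
    have hfl2 : u - (⌊u⌋ : ℝ) ≤ 1 := by
      have := Int.lt_floor_add_one u; linarith
    by_cases hn : |j - ⌊u⌋| ≤ 1
    · -- near node : |u - j| ≤ 2
      have hn' : |(j : ℝ) - ⌊u⌋| ≤ 1 := by
        rw [← Int.cast_sub, ← Int.cast_abs]; exact_mod_cast hn
      have hx2 : |u - (j : ℝ)| ≤ 2 := by
        have : |u - (j : ℝ)| ≤ |u - (⌊u⌋ : ℝ)| + |(⌊u⌋ : ℝ) - j| := abs_sub_le _ _ _
        have h1 : |u - (⌊u⌋ : ℝ)| ≤ 1 := abs_le.mpr ⟨by linarith, hfl2⟩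
        have h2 : |(⌊u⌋ : ℝ) - j| = |(j : ℝ) - ⌊u⌋| := abs_sub_comm _ _
        linarith [hn', h2 ▸ this]
      rw [hg]
      rw [if_pos hn]
      calc |jackson k α (u - j)| * |u - j| ^ β
          ≤ c * |u - j| ^ β :=
            mul_le_mul_of_nonneg_right (abs_jackson_le k α _) (Real.rpow_nonneg (abs_nonneg _) β)
        _ ≤ c * 2 ^ β := by
            apply mul_le_mul_of_nonneg_left _ hc0
            exact Real.rpow_le_rpow (abs_nonneg _) hx2 hβ0
    · -- far node : |u - j| ≥ |n| - 1 ≥ 1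
      push_neg at hn
      have hn2 : (2 : ℤ) ≤ |j - ⌊u⌋| := hn
      have hn2' : (2 : ℝ) ≤ (|j - ⌊u⌋| : ℝ) := by exact_mod_cast hn2
      have habs : (|j - ⌊u⌋| : ℝ) = |(j : ℝ) - ⌊u⌋| := by
        push_cast; rfl
      have hxlow : (|j - ⌊u⌋| : ℝ) - 1 ≤ |u - (j : ℝ)| := by
        have h1 : |u - (⌊u⌋ : ℝ)| ≤ 1 := abs_le.mpr ⟨by linarith, hfl2⟩
        have htri : |(j : ℝ) - ⌊u⌋| ≤ |(j : ℝ) - u| + |u - ⌊u⌋| := abs_sub_le _ _ _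
        have h2 : |(j : ℝ) - u| = |u - j| := abs_sub_comm _ _
        rw [habs]
        linarith [h2 ▸ htri]
      have hx1 : (1 : ℝ) ≤ |u - (j : ℝ)| := by linarith
      rw [hg]
      rw [if_neg (not_le.mpr hn)]
      push_cast
      calc |jackson k α (u - ↑j)| * |u - ↑j| ^ β
          ≤ c * A * |u - ↑j| ^ (β - 2 * (k : ℝ)) := hJ2 _ hx1
        _ ≤ c * A * (|(j : ℝ) - ⌊u⌋| - 1) ^ (β - 2 * (k : ℝ)) := by
            apply mul_le_mul_of_nonneg_left _ (by positivity)
            refine Real.rpow_le_rpow_of_nonpos (by rw [← habs]; linarith) ?_ hp0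
            rw [← habs]; exact hxlow
  have hterm_nonneg : ∀ (u : ℝ) (j : ℤ), 0 ≤ |jackson k α (u - j)| * |u - j| ^ β := by
    intro u j
    exact mul_nonneg (abs_nonneg _) (Real.rpow_nonneg (abs_nonneg _) β)
  have hsum : ∀ u : ℝ, Summable fun j : ℤ => |jackson k α (u - j)| * |u - j| ^ β := by
    intro u
    exact Summable.of_nonneg_of_le (hterm_nonneg u) (key u)
      ((Equiv.subRight (⌊u⌋)).summable_iff.mpr hgsum)
  refine ⟨hsum, ⟨∑' n, g n, fun u => ?_⟩⟩
  calc (∑' j : ℤ, |jackson k α (u - j)| * |u - j| ^ β)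
      ≤ ∑' j : ℤ, g (j - ⌊u⌋) :=
        Summable.tsum_le_tsum (key u) (hsum u) ((Equiv.subRight (⌊u⌋)).summable_iff.mpr hgsum)
    _ = ∑' n, g n := (Equiv.subRight (⌊u⌋)).tsum_eq g
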